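/- LP relaxation is exact for chains (Theorem 2): For a chain of length k ≥ 3 with positive weights a_1, …, a_{k−1} on consecutive edges and weight −b (b > 0) on the edge (1, k), every LP-feasible point x on k vertices satisfies ∑_{i=1}^{k−1} a_i · x(i, i+1) − b · x(1, k) ≤ ∑_{i=1}^{k−1} a_i − min(a_1, …, a_{k−1}, b). Consequently, the optimal value of the LP relaxation equals the maximum of the score Q over all partitions of the chain. -/
import Mathlib


open Finset

/-- Score of a partition `C` of a weighted complete graph `w`:
sum of weights of edges within clusters, `Q_w(C) = ∑_{i<j, C i = C j} w i j`. -/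
noncomputable def cpScore {n : ℕ} (w : Fin n → Fin n → ℝ) (C : Fin n → ℕ) : ℝ :=
  ∑ i : Fin n, ∑ j : Fin n, if i < j ∧ C i = C j then w i j else 0

/-- Trivial upper bound `Q̄(w) = ∑_{i<j, 0 < w i j} w i j`. -/
noncomputable def trivUB {n : ℕ} (w : Fin n → Fin n → ℝ) : ℝ :=
  ∑ i : Fin n, ∑ j : Fin n, if i < j ∧ 0 < w i j then w i j else 0

/-- `ws` is a subnetwork of `w`: symmetric, `|ws i j| ≤ |w i j|` and weights share signs. -/
def IsSubnetwork {n : ℕ} (w ws : Fin n → Fin n → ℝ) : Prop :=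
  (∀ i j, ws i j = ws j i) ∧
  ∀ i j : Fin n, i < j → |ws i j| ≤ |w i j| ∧ 0 ≤ ws i j * w i j

/-- An LP-feasible point: symmetric, entries in `[0,1]`, satisfying the triangle
inequalities of the LP relaxation of the clique partitioning ILP. -/
def LPFeasible {n : ℕ} (x : Fin n → Fin n → ℝ) : Prop :=
  (∀ i j, x i j = x j i) ∧
  (∀ i j : Fin n, i < j → 0 ≤ x i j ∧ x i j ≤ 1) ∧
  (∀ i j k : Fin n, i < j → j < k →
    x i j + x j k - x i k ≤ 1 ∧ x i j - x j k + x i k ≤ 1 ∧ -x i j + x j k + x i k ≤ 1)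

/-- LP objective value `∑_{i<j} w i j * x i j`. -/
noncomputable def lpObj {n : ℕ} (w x : Fin n → Fin n → ℝ) : ℝ :=
  ∑ i : Fin n, ∑ j : Fin n, if i < j then w i j * x i j else 0

/-- Weights of a chain on `k` vertices `0, …, k-1`: consecutive edges `(i, i+1)`
have positive weight `a i`, the edge `(0, k-1)` has weight `-b`, all other edges `0`. -/
noncomputable def chainW (k : ℕ) (a : ℕ → ℝ) (b : ℝ) : Fin k → Fin k → ℝ := fun i j =>
  if j.val = i.val + 1 then a i.val
  else if i.val = j.val + 1 then a j.val
  else if i.val = 0 ∧ j.val = k - 1 then -b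
  else if i.val = k - 1 ∧ j.val = 0 then -b
  else 0


/-- ℕ-indexed view of an LP point. -/
noncomputable def natX (k : ℕ) (x : Fin k → Fin k → ℝ) : ℕ → ℕ → ℝ := fun i j =>
  if h : i < k ∧ j < k then x ⟨i, h.1⟩ ⟨j, h.2⟩ else 0

lemma natX_eq {k : ℕ} (x : Fin k → Fin k → ℝ) {i j : ℕ} (hi : i < k) (hj : j < k) :
    natX k x i j = x ⟨i, hi⟩ ⟨j, hj⟩ := dif_pos ⟨hi, hj⟩

lemma natX_coe {k : ℕ} (x : Fin k → Fin k → ℝ) (i j : Fin k) :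
    natX k x i.val j.val = x i j := by
  rw [natX_eq x i.isLt j.isLt]

lemma natX_bounds {k : ℕ} {x : Fin k → Fin k → ℝ} (hx : LPFeasible x) {i j : ℕ}
    (hij : i < j) (hj : j < k) : 0 ≤ natX k x i j ∧ natX k x i j ≤ 1 := by
  rw [natX_eq x (lt_trans hij hj) hj]
  exact hx.2.1 _ _ (Fin.mk_lt_mk.mpr hij)

lemma chain_ineq {k : ℕ} {x : Fin k → Fin k → ℝ} (hx : LPFeasible x) :
    ∀ j, 1 ≤ j → j < k →
      (∑ i ∈ Finset.range j, natX k x i (i + 1)) - ((j : ℝ) - 1) ≤ natX k x 0 j := by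
  intro j
  induction j with
  | zero => omega
  | succ j ih =>
    intro _ hjk
    by_cases hj1 : j = 0
    · subst hj1
      simp [Finset.sum_range_one]
    · have hj : 1 ≤ j := Nat.one_le_iff_ne_zero.mpr hj1
      have ihj := ih hj (by omega)
      have htri := (hx.2.2 ⟨0, by omega⟩ ⟨j, by omega⟩ ⟨j + 1, hjk⟩
        (Fin.mk_lt_mk.mpr (by omega)) (Fin.mk_lt_mk.mpr (by omega))).1
      have e1 : natX k x 0 j = x ⟨0, by omega⟩ ⟨j, by omega⟩ := natX_eq x (by omega) (by omega)
      have e2 : natX k x j (j + 1) = x ⟨j, by omega⟩ ⟨j + 1, hjk⟩ := natX_eq x (by omega) hjk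
      have e3 : natX k x 0 (j + 1) = x ⟨0, by omega⟩ ⟨j + 1, hjk⟩ := natX_eq x (by omega) hjk
      rw [Finset.sum_range_succ, e2, e3]
      rw [e1] at ihj
      push_cast
      linarith

lemma lpObj_chain {k : ℕ} (hk : 3 ≤ k) (a : ℕ → ℝ) (b : ℝ) (x : Fin k → Fin k → ℝ) :
    lpObj (chainW k a b) x =
      (∑ i ∈ Finset.range (k - 1), a i * natX k x i (i + 1)) - b * natX k x 0 (k - 1) := by
  set G : ℕ → ℕ → ℝ := fun i j =>
    (if j = i + 1 then a i * natX k x i (i + 1) else 0)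
    + (if i = 0 ∧ j = k - 1 then -(b * natX k x 0 (k - 1)) else 0) with hG
  have key : ∀ i j : Fin k, (if i < j then chainW k a b i j * x i j else 0) = G i.val j.val := by
    intro i j
    have hi := i.isLt; have hj := j.isLt
    simp only [hG]
    by_cases hij : (i : ℕ) < (j : ℕ)
    · rw [if_pos (Fin.lt_def.mpr hij)]
      unfold chainW
      by_cases h1 : (j : ℕ) = (i : ℕ) + 1
      · rw [if_pos h1, if_pos h1, if_neg (show ¬((i : ℕ) = 0 ∧ (j : ℕ) = k - 1) by omega),
          add_zero]
        have h2 : natX k x (i : ℕ) ((i : ℕ) + 1) = natX k x (i : ℕ) (j : ℕ) := by rw [h1]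
        rw [h2, natX_coe]
      · rw [if_neg h1, if_neg (show ¬(i : ℕ) = (j : ℕ) + 1 by omega), if_neg h1]
        by_cases h3 : (i : ℕ) = 0 ∧ (j : ℕ) = k - 1
        · rw [if_pos h3, if_pos h3]
          have h4 : natX k x 0 (k - 1) = natX k x (i : ℕ) (j : ℕ) := by rw [h3.1, h3.2]
          rw [h4, natX_coe]
          ring
        · rw [if_neg h3, if_neg (show ¬((i : ℕ) = k - 1 ∧ (j : ℕ) = 0) by omega), if_neg h3]
          ring
    · rw [if_neg (fun h => hij (Fin.lt_def.mp h)),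
        if_neg (show ¬(j : ℕ) = (i : ℕ) + 1 by omega),
        if_neg (show ¬((i : ℕ) = 0 ∧ (j : ℕ) = k - 1) by omega)]
      norm_num
  have step1 : lpObj (chainW k a b) x = ∑ i ∈ Finset.range k, ∑ j ∈ Finset.range k, G i j := by
    unfold lpObj
    rw [← Fin.sum_univ_eq_sum_range (fun i => ∑ j ∈ Finset.range k, G i j) k]
    refine Finset.sum_congr rfl fun i _ => ?_
    rw [← Fin.sum_univ_eq_sum_range (G i.val) k]
    exact Finset.sum_congr rfl fun j _ => key i j
  have inner : ∀ i ∈ Finset.range k, ∑ j ∈ Finset.range k, G i j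
      = (if i + 1 < k then a i * natX k x i (i + 1) else 0)
        + (if i = 0 then -(b * natX k x 0 (k - 1)) else 0) := by
    intro i _
    simp only [hG]
    rw [Finset.sum_add_distrib]
    congr 1
    · rw [Finset.sum_ite_eq' (Finset.range k) (i + 1) (fun _ => a i * natX k x i (i + 1))]
      simp [Finset.mem_range]
    · have : ∀ j ∈ Finset.range k,
          (if i = 0 ∧ j = k - 1 then -(b * natX k x 0 (k - 1)) else 0)
          = (if j = k - 1 then (if i = 0 then -(b * natX k x 0 (k - 1)) else 0) else 0) := by
        intro j _
        split_ifs <;> tauto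
      rw [Finset.sum_congr rfl this,
        Finset.sum_ite_eq' (Finset.range k) (k - 1)
          (fun _ => if i = 0 then -(b * natX k x 0 (k - 1)) else 0),
        if_pos (Finset.mem_range.mpr (by omega))]
  rw [step1, Finset.sum_congr rfl inner, Finset.sum_add_distrib]
  have part1 : ∑ i ∈ Finset.range k, (if i + 1 < k then a i * natX k x i (i + 1) else 0)
      = ∑ i ∈ Finset.range (k - 1), a i * natX k x i (i + 1) := by
    rw [← Finset.sum_subset (Finset.range_subset_range.mpr (show k - 1 ≤ k by omega))
      (fun i hi hni => if_neg (by simp only [Finset.mem_range] at hi hni; omega))]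
    exact Finset.sum_congr rfl fun i hi => if_pos (by rw [Finset.mem_range] at hi; omega)
  have part2 : ∑ i ∈ Finset.range k, (if i = 0 then -(b * natX k x 0 (k - 1)) else 0)
      = -(b * natX k x 0 (k - 1)) := by
    rw [Finset.sum_ite_eq' (Finset.range k) 0 (fun _ => -(b * natX k x 0 (k - 1))),
      if_pos (Finset.mem_range.mpr (by omega))]
  rw [part1, part2]
  ring

lemma chain_bound {k : ℕ} (hk : 3 ≤ k) (a : ℕ → ℝ) (b : ℝ)
    (ha : ∀ i, i < k - 1 → 0 < a i) (hb : 0 < b)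
    {x : Fin k → Fin k → ℝ} (hx : LPFeasible x)
    (hne : (Finset.range (k - 1)).Nonempty) :
    (∑ i ∈ Finset.range (k - 1), a i * natX k x i (i + 1)) - b * natX k x 0 (k - 1)
      ≤ (∑ i ∈ Finset.range (k - 1), a i) - min ((Finset.range (k - 1)).inf' hne a) b := by
  set m := min ((Finset.range (k - 1)).inf' hne a) b with hm
  have hm_pos : 0 < m :=
    lt_min ((Finset.lt_inf'_iff hne).mpr fun i hi => ha i (Finset.mem_range.mp hi)) hb
  have hm_a : ∀ i ∈ Finset.range (k - 1), m ≤ a i :=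
    fun i hi => le_trans (min_le_left _ _) (Finset.inf'_le a hi)
  have hm_b : m ≤ b := min_le_right _ _
  set S := ∑ i ∈ Finset.range (k - 1), natX k x i (i + 1) with hS
  set y := natX k x 0 (k - 1) with hy
  have hy0 : 0 ≤ y := (natX_bounds hx (show 0 < k - 1 by omega) (by omega)).1
  have hch : S - (((k - 1 : ℕ) : ℝ) - 1) ≤ y := chain_ineq hx (k - 1) (by omega) (by omega)
  have hXb : ∀ i ∈ Finset.range (k - 1), 0 ≤ natX k x i (i + 1) ∧ natX k x i (i + 1) ≤ 1 :=
    fun i hi => natX_bounds hx (Nat.lt_succ_self i) (by have := Finset.mem_range.mp hi; omega)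
  have e1 : (∑ i ∈ Finset.range (k - 1), a i * natX k x i (i + 1)) - m * S
      = ∑ i ∈ Finset.range (k - 1), (a i - m) * natX k x i (i + 1) := by
    rw [hS, Finset.mul_sum, ← Finset.sum_sub_distrib]
    exact Finset.sum_congr rfl fun i _ => by ring
  have e2 : (∑ i ∈ Finset.range (k - 1), (a i - m) * natX k x i (i + 1))
      ≤ ∑ i ∈ Finset.range (k - 1), (a i - m) := by
    refine Finset.sum_le_sum fun i hi => ?_
    have h1 := hm_a i hi
    have h2 := (hXb i hi).1
    have h3 := (hXb i hi).2
    nlinarith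
  have e3 : (∑ i ∈ Finset.range (k - 1), (a i - m))
      = (∑ i ∈ Finset.range (k - 1), a i) - ((k - 1 : ℕ) : ℝ) * m := by
    rw [Finset.sum_sub_distrib, Finset.sum_const, Finset.card_range, nsmul_eq_mul]
  have h4 : m * y ≤ b * y := mul_le_mul_of_nonneg_right hm_b hy0
  have h5 : m * (S - (((k - 1 : ℕ) : ℝ) - 1)) ≤ m * y :=
    mul_le_mul_of_nonneg_left hch hm_pos.le
  nlinarith [e1, e2, e3, h4, h5]

/-- Indicator LP point of a partition. -/
noncomputable def indC {n : ℕ} (C : Fin n → ℕ) : Fin n → Fin n → ℝ :=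
  fun i j => if C i = C j then 1 else 0

lemma indC_feasible {n : ℕ} (C : Fin n → ℕ) : LPFeasible (indC C) := by
  refine ⟨fun i j => ?_, fun i j _ => ?_, fun i j l _ _ => ?_⟩
  · unfold indC
    split_ifs with h1 h2 <;> first | rfl | omega
  · unfold indC
    split_ifs <;> norm_num
  · unfold indC
    split_ifs <;> (try norm_num) <;> omega

lemma cpScore_eq_lpObj {n : ℕ} (w : Fin n → Fin n → ℝ) (C : Fin n → ℕ) :
    cpScore w C = lpObj w (indC C) := by
  unfold cpScore lpObj indC
  refine Finset.sum_congr rfl fun i _ => Finset.sum_congr rfl fun j _ => ?_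
  by_cases h1 : i < j <;> by_cases h2 : C i = C j <;> simp [h1, h2]

/-- **LP relaxation is exact for chains.** For a chain of length `k ≥ 3` with positive
weights `a 0, …, a (k-2)` on consecutive edges and weight `-b` (`b > 0`) on the edge
`(0, k-1)`, every LP-feasible point `x` satisfies
`∑ i, a i * x(i, i+1) - b * x(0, k-1) ≤ ∑ i, a i - min (min of the a's) b`.
Consequently, the optimal value of the LP relaxation equals the maximum of the
partition score over all partitions of the chain. -/
theorem chain_LP_exact (k : ℕ) (hk : 3 ≤ k) (a : ℕ → ℝ) (b : ℝ)
    (ha : ∀ i, i < k - 1 → 0 < a i) (hb : 0 < b) :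
    (∀ x : Fin k → Fin k → ℝ, LPFeasible x →
      (∑ i : Fin (k - 1), a i.val *
          x ⟨i.val, by have := i.isLt; omega⟩ ⟨i.val + 1, by have := i.isLt; omega⟩)
        - b * x ⟨0, by omega⟩ ⟨k - 1, by omega⟩
      ≤ (∑ i ∈ Finset.range (k - 1), a i)
        - min ((Finset.range (k - 1)).inf' (Finset.nonempty_range_iff.mpr (by omega)) a) b) ∧
    ∃ q : ℝ,
      IsGreatest {v : ℝ | ∃ C : Fin k → ℕ, v = cpScore (chainW k a b) C} q ∧
      IsGreatest {v : ℝ | ∃ x : Fin k → Fin k → ℝ, LPFeasible x ∧ v = lpObj (chainW k a b) x} q := by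
  have hne : (Finset.range (k - 1)).Nonempty := Finset.nonempty_range_iff.mpr (by omega)
  set A := ∑ i ∈ Finset.range (k - 1), a i with hA
  set m := min ((Finset.range (k - 1)).inf' hne a) b with hm
  -- conversion of the statement's Fin sums to natX form
  have conv1 : ∀ x : Fin k → Fin k → ℝ,
      (∑ i : Fin (k - 1), a i.val *
          x ⟨i.val, by have := i.isLt; omega⟩ ⟨i.val + 1, by have := i.isLt; omega⟩)
      = ∑ i ∈ Finset.range (k - 1), a i * natX k x i (i + 1) := by
    intro x
    rw [← Fin.sum_univ_eq_sum_range (fun i => a i * natX k x i (i + 1)) (k - 1)]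
    refine Finset.sum_congr rfl fun i _ => ?_
    rw [natX_eq x (by have := i.isLt; omega) (by have := i.isLt; omega)]
  have conv2 : ∀ x : Fin k → Fin k → ℝ,
      x ⟨0, by omega⟩ ⟨k - 1, by omega⟩ = natX k x 0 (k - 1) := by
    intro x
    rw [natX_eq x (by omega) (by omega)]
  have main : ∀ x : Fin k → Fin k → ℝ, LPFeasible x →
      (∑ i ∈ Finset.range (k - 1), a i * natX k x i (i + 1)) - b * natX k x 0 (k - 1)
        ≤ A - m := fun x hx => chain_bound hk a b ha hb hx hne
  constructor
  · intro x hx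
    rw [conv1 x, conv2 x]
    exact main x hx
  -- construction of the optimal partition
  obtain ⟨i0, hi0, hinf⟩ := Finset.exists_mem_eq_inf' hne a
  have hi0k : i0 < k - 1 := Finset.mem_range.mp hi0
  have hCval : ∃ C : Fin k → ℕ, cpScore (chainW k a b) C = A - m := by
    by_cases hcase : a i0 ≤ b
    · have hm_eq : m = a i0 := by rw [hm, hinf, min_eq_left hcase]
      refine ⟨fun v => if v.val ≤ i0 then 0 else 1, ?_⟩
      set C0 : Fin k → ℕ := fun v => if v.val ≤ i0 then 0 else 1 with hC0
      rw [cpScore_eq_lpObj, lpObj_chain hk a b (indC C0)]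
      have hterm : ∀ i ∈ Finset.range (k - 1),
          a i * natX k (indC C0) i (i + 1) = a i - (if i = i0 then a i else 0) := by
        intro i hi
        have hik : i < k - 1 := Finset.mem_range.mp hi
        rw [natX_eq (indC C0) (by omega) (by omega)]
        simp only [indC, hC0]
        split_ifs <;> first | omega | exact False.elim ‹False› | ring1
      have hlast : natX k (indC C0) 0 (k - 1) = 0 := by
        rw [natX_eq (indC C0) (by omega) (by omega)]
        simp only [indC, hC0]
        split_ifs <;> first | omega | exact False.elim ‹False› | rfl
      rw [Finset.sum_congr rfl hterm, hlast, Finset.sum_sub_distrib,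
        Finset.sum_ite_eq' (Finset.range (k - 1)) i0 a, if_pos hi0, hm_eq]
      ring
    · have hm_eq : m = b := by
        rw [hm, min_eq_right (hinf ▸ (not_le.mp hcase).le)]
      refine ⟨fun _ => 0, ?_⟩
      rw [cpScore_eq_lpObj, lpObj_chain hk a b (indC (fun _ => 0))]
      have hterm : ∀ i ∈ Finset.range (k - 1),
          a i * natX k (indC (fun _ => (0 : ℕ))) i (i + 1) = a i := by
        intro i hi
        have hik : i < k - 1 := Finset.mem_range.mp hi
        rw [natX_eq _ (by omega) (by omega)]
        simp [indC]
      have hlast : natX k (indC (fun _ => (0 : ℕ))) 0 (k - 1) = 1 := by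
        rw [natX_eq _ (by omega) (by omega)]
        simp [indC]
      rw [Finset.sum_congr rfl hterm, hlast, hm_eq]
      ring
  obtain ⟨C0, hC0val⟩ := hCval
  have hub : ∀ C : Fin k → ℕ, cpScore (chainW k a b) C ≤ A - m := by
    intro C
    rw [cpScore_eq_lpObj, lpObj_chain hk a b (indC C)]
    exact main (indC C) (indC_feasible C)
  refine ⟨A - m, ⟨⟨C0, hC0val.symm⟩, fun v hv => ?_⟩, ⟨⟨indC C0, indC_feasible C0, ?_⟩,
    fun v hv => ?_⟩⟩
  · obtain ⟨C, rfl⟩ := hv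
    exact hub C
  · rw [← cpScore_eq_lpObj, hC0val]
  · obtain ⟨x, hx, rfl⟩ := hv
    rw [lpObj_chain hk a b x]
    exact main x hx
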